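/- Recovery of the conditional: if m_{x,Y} is the conditional embedding of conditional BPA m_{Y|x}, and m_{X=x} is the deterministic BPA with m_{X=x}({x}) = 1 (vacuously extended to Ω_X × Ω_Y), then (m_{x,Y} ⊕ m_{X=x})↓Ω_Y = m_{Y|x}. -/

import Mathlib

/-- A basic probability assignment on a finite set `S`. -/
def IsBPA {S : Type*} [Fintype S] [DecidableEq S] (m : Finset S → ℝ) : Prop :=
  m ∅ = 0 ∧ (∀ a, 0 ≤ m a) ∧ (∀ a, m a ≤ 1) ∧ ∑ a : Finset S, m a = 1

/-- The embedded focal set `({x} × b) ∪ ((Ω_X \ {x}) × Ω_Y)`. -/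
def embSet {ΩX ΩY : Type*} [Fintype ΩX] [Fintype ΩY] [DecidableEq ΩX] [DecidableEq ΩY]
    (x : ΩX) (b : Finset ΩY) : Finset (ΩX × ΩY) :=
  ({x} ×ˢ b) ∪ (({x}ᶜ : Finset ΩX) ×ˢ (Finset.univ : Finset ΩY))

/-- Conditional embedding of a conditional BPA `m_{Y|x}` into a BPA on `Ω_X × Ω_Y`. -/
def condEmbed {ΩX ΩY : Type*} [Fintype ΩX] [Fintype ΩY] [DecidableEq ΩX] [DecidableEq ΩY]
    (x : ΩX) (mYx : Finset ΩY → ℝ) (c : Finset (ΩX × ΩY)) : ℝ :=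
  ∑ b ∈ Finset.univ.filter (fun b : Finset ΩY => embSet x b = c), mYx b

/-- Marginalization of a BPA on `Ω₁ × Ω₂` to `Ω₁`. -/
def margFst {Ω₁ Ω₂ : Type*} [Fintype Ω₁] [Fintype Ω₂] [DecidableEq Ω₁] [DecidableEq Ω₂]
    (m : Finset (Ω₁ × Ω₂) → ℝ) (a : Finset Ω₁) : ℝ :=
  ∑ b ∈ Finset.univ.filter (fun b : Finset (Ω₁ × Ω₂) => b.image Prod.fst = a), m b

/-- Marginalization of a BPA on `Ω₁ × Ω₂` to `Ω₂`. -/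
def margSnd {Ω₁ Ω₂ : Type*} [Fintype Ω₁] [Fintype Ω₂] [DecidableEq Ω₁] [DecidableEq Ω₂]
    (m : Finset (Ω₁ × Ω₂) → ℝ) (a : Finset Ω₂) : ℝ :=
  ∑ b ∈ Finset.univ.filter (fun b : Finset (Ω₁ × Ω₂) => b.image Prod.snd = a), m b
/-- Normalization constant of Dempster's rule. -/
def Kconst {Ω : Type*} [Fintype Ω] [DecidableEq Ω] (m₁ m₂ : Finset Ω → ℝ) : ℝ :=
  1 - ∑ b₁ : Finset Ω, ∑ b₂ : Finset Ω, if b₁ ∩ b₂ = ∅ then m₁ b₁ * m₂ b₂ else 0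

/-- Dempster's rule of combination on a common frame. -/
noncomputable def dempster {Ω : Type*} [Fintype Ω] [DecidableEq Ω] (m₁ m₂ : Finset Ω → ℝ) :
    Finset Ω → ℝ := fun a =>
  if a = ∅ then 0
  else (Kconst m₁ m₂)⁻¹ *
    ∑ b₁ : Finset Ω, ∑ b₂ : Finset Ω, if b₁ ∩ b₂ = a then m₁ b₁ * m₂ b₂ else 0

/-! Conditioning the conditional embedding on `X = x` keeps only its slice over `x`: every focal
set `({x} × b) ∪ ((Ω_X \ {x}) × Ω_Y)` meets `{x} × Ω_Y` in `{x} × b`, which is empty only for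
`b = ∅`, so the conflict is `m_{Y|x}(∅) = 0` and Dempster's rule reduces to transporting the masses of
`m_{Y|x}` along `b ↦ {x} × b`. Projecting to `Ω_Y` undoes this transport. -/

open Finset Function

def mapMass {α β M : Type*} [Fintype α] [DecidableEq β] [AddCommMonoid M]
    (f : α → β) (m : α → M) (c : β) : M :=
  ∑ a ∈ univ.filter (fun a => f a = c), m a

def deterministic {Ω : Type*} [DecidableEq Ω] (s : Finset Ω) (c : Finset Ω) : ℝ :=
  if c = s then 1 else 0

section mapMass

variable {α β γ M : Type*} [Fintype α] [AddCommMonoid M]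

lemma mapMass_id [DecidableEq α] (m : α → M) : mapMass id m = m := by
  funext c
  simp [mapMass, filter_eq']

lemma mapMass_mapMass [Fintype β] [DecidableEq β] [DecidableEq γ] (f : α → β) (g : β → γ)
    (m : α → M) : mapMass g (mapMass f m) = mapMass (g ∘ f) m := by
  funext c
  unfold mapMass
  rw [sum_fiberwise_eq_sum_filter]
  simp

lemma mapMass_apply_of_injective [DecidableEq β] {f : α → β} (hf : Injective f) (m : α → M)
    (a : α) : mapMass f m (f a) = m a := by
  refine sum_eq_single_of_mem a (by simp) fun a' ha' hne => ?_
  exact absurd (hf (mem_filter.1 ha').2) hne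

end mapMass

section dempster

variable {Ω : Type*} [Fintype Ω] [DecidableEq Ω]

lemma sum_sum_ite_inter_mul_deterministic (m : Finset Ω → ℝ) (s a : Finset Ω) :
    ∑ b₁ : Finset Ω, ∑ b₂ : Finset Ω,
      (if b₁ ∩ b₂ = a then m b₁ * deterministic s b₂ else 0) = mapMass (· ∩ s) m a := by
  rw [mapMass, sum_filter]
  refine sum_congr rfl fun b₁ _ => ?_
  rw [sum_eq_single s (fun b₂ _ hb => by simp [deterministic, hb]) (by simp)]
  simp [deterministic]

lemma Kconst_deterministic (m : Finset Ω → ℝ) (s : Finset Ω) :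
    Kconst m (deterministic s) = 1 - mapMass (· ∩ s) m ∅ := by
  rw [Kconst, sum_sum_ite_inter_mul_deterministic]

lemma dempster_deterministic {m : Finset Ω → ℝ} {s : Finset Ω}
    (hconflict : mapMass (· ∩ s) m ∅ = 0) :
    dempster m (deterministic s) = mapMass (· ∩ s) m := by
  funext a
  rw [dempster, Kconst_deterministic, hconflict, sub_zero, inv_one, one_mul,
    sum_sum_ite_inter_mul_deterministic]
  split_ifs with ha
  · rw [ha, hconflict]
  · rfl

end dempster

section embedding

variable {ΩX ΩY : Type*} [Fintype ΩX] [Fintype ΩY] [DecidableEq ΩX] [DecidableEq ΩY]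

lemma condEmbed_eq_mapMass (x : ΩX) (m : Finset ΩY → ℝ) :
    condEmbed x m = mapMass (embSet x) m := rfl

lemma margSnd_eq_mapMass (m : Finset (ΩX × ΩY) → ℝ) :
    margSnd m = mapMass (image Prod.snd) m := rfl

lemma embSet_inter_singleton_product_univ (x : ΩX) (b : Finset ΩY) :
    embSet x b ∩ ({x} ×ˢ univ) = {x} ×ˢ b := by
  ext ⟨p, q⟩
  simp only [embSet, mem_inter, mem_union, mem_product, mem_singleton, mem_compl, mem_univ]
  tauto

end embedding

lemma leftInverse_image_snd_singleton_product {ΩX ΩY : Type*} [DecidableEq ΩY] (x : ΩX) :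
    LeftInverse (image Prod.snd) (({x} : Finset ΩX) ×ˢ · : Finset ΩY → Finset (ΩX × ΩY)) :=
  fun _ => product_image_snd (singleton_nonempty x)

theorem recovery_of_conditional
    {ΩX ΩY : Type*} [Fintype ΩX] [Fintype ΩY] [DecidableEq ΩX] [DecidableEq ΩY]
    (x : ΩX) (mYx : Finset ΩY → ℝ) (hm : IsBPA mYx) :
    let mdet : Finset (ΩX × ΩY) → ℝ :=
      fun c => if c = ({x} : Finset ΩX) ×ˢ (Finset.univ : Finset ΩY) then 1 else 0
    ∀ b : Finset ΩY, margSnd (dempster (condEmbed x mYx) mdet) b = mYx b := by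
  intro mdet b
  have hslice : mapMass (· ∩ ({x} ×ˢ univ)) (condEmbed x mYx) =
      mapMass (({x} : Finset ΩX) ×ˢ · : Finset ΩY → Finset (ΩX × ΩY)) mYx := by
    rw [condEmbed_eq_mapMass, mapMass_mapMass]
    exact congrArg (mapMass · mYx) (funext (embSet_inter_singleton_product_univ x))
  have hleft := leftInverse_image_snd_singleton_product (ΩY := ΩY) x
  have hconflict : mapMass (({x} : Finset ΩX) ×ˢ · : Finset ΩY → Finset (ΩX × ΩY)) mYx ∅ = 0 := by
    simpa [hm.1] using mapMass_apply_of_injective hleft.injective mYx ∅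
  change margSnd (dempster (condEmbed x mYx) (deterministic ({x} ×ˢ univ))) b = mYx b
  rw [dempster_deterministic (hslice ▸ hconflict), hslice, margSnd_eq_mapMass, mapMass_mapMass,
    hleft.comp_eq_id, mapMass_id]
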